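/- arXiv:2507.21434 — 3 statements merged into one kernel-verified Lean document; each statement's English description precedes it below -/
import Mathlib

section
/- Let (Ω, μ) be a probability space and let Z_i = (U_i, V_i), i ∈ ℕ, be an i.i.d. sequence of random vectors in ℝ² with common law ν. Define the sample Kendall's tau τ̂_n = (2/(n(n−1))) · Σ_{1≤i<j≤n} sign((U_i − U_j)(V_i − V_j)) and the population Kendall's tau τ* = ∫∫ sign((u₁ − u₂)(v₁ − v₂)) d(ν ⊗ ν). Then τ̂_n → τ* almost surely as n → ∞, and consequently τ̂_n → τ* in probability. -/
open MeasureTheory ProbabilityTheory Filter Finset Topology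

/-!
The centred kernel terms of two index pairs with no common index are independent with mean zero,
so only the `O(n³)` overlapping pairs of pairs contribute to `E (τ̂ₙ - τ*)²`, which is therefore
`O(1/n)`. This is summable along the squares `n = s²`, so `τ̂_{s²} → τ*` almost surely. Between
consecutive squares only `O(n^{3/2})` of the `n(n-1)/2` pairs are new, and the kernel is bounded,
so `τ̂ₙ` moves by `O(1/√n)` there.
-/

theorem ae_tendsto_zero_of_summable_integral_sq {Ω : Type*} [MeasurableSpace Ω] {μ : Measure Ω}
    {X : ℕ → Ω → ℝ} (hX : ∀ k, Integrable (fun ω => X k ω ^ 2) μ)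
    (hsum : Summable fun k => ∫ ω, X k ω ^ 2 ∂μ) :
    ∀ᵐ ω ∂μ, Tendsto (fun k => X k ω) atTop (𝓝 0) := by
  have hf : ∀ k, AEMeasurable (fun ω => ENNReal.ofReal (X k ω ^ 2)) μ :=
    fun k => (hX k).aemeasurable.ennreal_ofReal
  have hfin : ∫⁻ ω, ∑' k, ENNReal.ofReal (X k ω ^ 2) ∂μ ≠ ⊤ := by
    rw [lintegral_tsum hf]
    simp_rw [← ofReal_integral_eq_lintegral_ofReal (hX _) (ae_of_all _ fun _ => sq_nonneg _)]
    exact hsum.tsum_ofReal_ne_top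
  filter_upwards [ae_lt_top' (AEMeasurable.tsum hf) hfin] with ω hω
  have hsq : Tendsto (fun k => X k ω ^ 2) atTop (𝓝 0) := by
    have := (ENNReal.tendsto_toReal ENNReal.zero_ne_top).comp
      (ENNReal.tendsto_atTop_zero_of_tsum_ne_top hω.ne)
    simpa [Function.comp_def, ENNReal.toReal_ofReal (sq_nonneg _)] using this
  have habs := (Real.continuous_sqrt.tendsto 0).comp hsq
  simp only [Function.comp_def, Real.sqrt_sq_eq_abs, Real.sqrt_zero] at habs
  exact tendsto_zero_iff_abs_tendsto_zero _ |>.2 habs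

theorem integral_sq_sum_le_of_integral_mul_eq_zero {Ω ι : Type*} [MeasurableSpace Ω] {μ : Measure Ω}
    [IsProbabilityMeasure μ] (s : Finset ι) {X : ι → Ω → ℝ}
    (hX : ∀ i, AEStronglyMeasurable (X i) μ) {B : ℝ} (hB : ∀ i ω, |X i ω| ≤ B)
    (R : ι → ι → Prop) [DecidableRel R]
    (hR : ∀ i ∈ s, ∀ j ∈ s, ¬ R i j → ∫ ω, X i ω * X j ω ∂μ = 0) :
    ∫ ω, (∑ i ∈ s, X i ω) ^ 2 ∂μ ≤ B ^ 2 * ∑ i ∈ s, (s.filter (R i)).card := by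
  have hXX : ∀ i j ω, ‖X i ω * X j ω‖ ≤ B ^ 2 := fun i j ω => by
    rw [norm_mul, Real.norm_eq_abs, Real.norm_eq_abs, sq]
    exact mul_le_mul (hB i ω) (hB j ω) (abs_nonneg _) ((abs_nonneg _).trans (hB i ω))
  have hint : ∀ i j, Integrable (fun ω => X i ω * X j ω) μ := fun i j =>
    .of_bound ((hX i).mul (hX j)) _ (ae_of_all _ (hXX i j))
  calc ∫ ω, (∑ i ∈ s, X i ω) ^ 2 ∂μ = ∑ i ∈ s, ∑ j ∈ s, ∫ ω, X i ω * X j ω ∂μ := by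
        simp_rw [sq, sum_mul_sum]
        rw [integral_finsetSum _ fun i _ => integrable_finsetSum _ fun j _ => hint i j]
        exact sum_congr rfl fun i _ => integral_finsetSum _ fun j _ => hint i j
    _ = ∑ i ∈ s, ∑ j ∈ s.filter (R i), ∫ ω, X i ω * X j ω ∂μ :=
        sum_congr rfl fun i hi =>
          (sum_filter_of_ne fun j hj hne => of_not_not fun hR' => hne (hR i hi j hj hR')).symm
    _ ≤ ∑ i ∈ s, ∑ j ∈ s.filter (R i), B ^ 2 := by
        gcongr with i _ j _
        have := norm_integral_le_of_norm_le_const (μ := μ) (ae_of_all _ (hXX i j))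
        rw [probReal_univ, mul_one, Real.norm_eq_abs] at this
        exact le_of_abs_le this
    _ = B ^ 2 * ∑ i ∈ s, (s.filter (R i)).card := by
        rw [Nat.cast_sum, mul_sum]
        simp only [sum_const, nsmul_eq_mul, mul_comm]

namespace UStat

def pairs (n : ℕ) : Finset (ℕ × ℕ) := (range n ×ˢ range n).filter fun p => p.1 < p.2

@[simp]
lemma mem_pairs {n : ℕ} {p : ℕ × ℕ} : p ∈ pairs n ↔ p.1 < p.2 ∧ p.2 < n := by
  simp only [pairs, mem_filter, mem_product, mem_range]
  omega

lemma pairs_mono : Monotone pairs := fun _ _ hmn _ hp => by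
  rw [mem_pairs] at hp ⊢
  omega

lemma sum_pairs {M : Type*} [AddCommMonoid M] (n : ℕ) (f : ℕ → ℕ → M) :
    ∑ p ∈ pairs n, f p.1 p.2 = ∑ i ∈ range n, ∑ j ∈ Ioo i n, f i j := by
  rw [pairs, sum_filter, sum_product]
  refine sum_congr rfl fun i _ => ?_
  rw [← sum_filter]
  congr 1
  ext j
  simp only [mem_filter, mem_range, mem_Ioo]
  omega

lemma card_pairs (n : ℕ) : ((pairs n).card : ℝ) = n * (n - 1) / 2 := by
  have hcard : (pairs n).card = ∑ i ∈ range n, (n - 1 - i) := by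
    rw [card_eq_sum_ones, sum_pairs n fun _ _ => 1]
    refine sum_congr rfl fun i _ => ?_
    rw [← card_eq_sum_ones, Nat.card_Ioo]
    omega
  rw [hcard, sum_range_reflect (fun i => i) n]
  rcases n with _ | n
  · simp
  · have h := Finset.sum_range_id_mul_two (n + 1)
    rw [Nat.add_sub_cancel] at h
    rw [Nat.cast_add_one, add_sub_cancel_right, eq_div_iff two_ne_zero]
    exact_mod_cast h

lemma card_filter_pairs_overlap_le (n : ℕ) (p : ℕ × ℕ) :
    ((pairs n).filter fun q => q.1 = p.1 ∨ q.1 = p.2 ∨ q.2 = p.1 ∨ q.2 = p.2).card ≤ 4 * n := by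
  calc _ ≤ (({p.1, p.2} ×ˢ range n) ∪ (range n ×ˢ {p.1, p.2})).card := by
        refine card_le_card fun q hq => ?_
        simp only [mem_filter, mem_pairs] at hq
        simp only [mem_union, mem_product, mem_insert, mem_singleton, mem_range]
        omega
    _ ≤ 2 * n + n * 2 := by
        refine (card_union_le _ _).trans (add_le_add ?_ ?_) <;>
          rw [card_product, card_range] <;> gcongr <;> exact card_le_two
    _ = 4 * n := by ring

noncomputable def pairAvg (a : ℕ → ℕ → ℝ) (n : ℕ) : ℝ :=
  2 / (n * (n - 1) : ℝ) * ∑ i ∈ range n, ∑ j ∈ Ioo i n, a i j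

-- `2 / (n * (n - 1))` and `1 / #(pairs n)` are both `0` for `n < 2`, so this holds for every `n`.
lemma pairAvg_eq (a : ℕ → ℕ → ℝ) (n : ℕ) :
    pairAvg a n = (∑ p ∈ pairs n, a p.1 p.2) / (pairs n).card := by
  rw [pairAvg, sum_pairs, card_pairs, div_div_eq_mul_div]
  ring

lemma card_pairs_pos {n : ℕ} (hn : 2 ≤ n) : (0 : ℝ) < (pairs n).card := by
  rw [card_pairs]
  have : (2 : ℝ) ≤ n := by exact_mod_cast hn
  nlinarith

section Deterministic

variable {a : ℕ → ℕ → ℝ} {C : ℝ}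

lemma abs_pairAvg_le (ha : ∀ i j, |a i j| ≤ C) (n : ℕ) : |pairAvg a n| ≤ C := by
  have hC : 0 ≤ C := (abs_nonneg _).trans (ha 0 0)
  have hsum : |∑ p ∈ pairs n, a p.1 p.2| ≤ (pairs n).card * C :=
    (abs_sum_le_sum_abs _ _).trans <| by simpa using sum_le_sum fun (p : ℕ × ℕ) _ => ha p.1 p.2
  rw [pairAvg_eq, abs_div, Nat.abs_cast]
  rcases (Nat.cast_nonneg (α := ℝ) (pairs n).card).eq_or_lt with h | h
  · rw [← h, div_zero]; exact hC
  · rwa [div_le_iff₀ h, mul_comm]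

lemma pairAvg_sub_const {n : ℕ} (hn : 2 ≤ n) (c : ℝ) :
    pairAvg a n - c = pairAvg (fun i j => a i j - c) n := by
  have := (card_pairs_pos hn).ne'
  rw [pairAvg_eq, pairAvg_eq, sum_sub_distrib, sum_const, nsmul_eq_mul]
  field_simp

lemma abs_pairAvg_sub_pairAvg_le (ha : ∀ i j, |a i j| ≤ C) {m n : ℕ} (hm : 2 ≤ m) (hmn : m ≤ n) :
    |pairAvg a n - pairAvg a m| ≤ 2 * C * (1 - (pairs m).card / (pairs n).card) := by
  have hsub := pairs_mono hmn
  set Pm : ℝ := ((pairs m).card : ℝ)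
  set Pn : ℝ := ((pairs n).card : ℝ)
  set Sm := ∑ p ∈ pairs m, a p.1 p.2
  set Sn := ∑ p ∈ pairs n, a p.1 p.2
  have hPm : 0 < Pm := card_pairs_pos hm
  have hPmn : Pm ≤ Pn := Nat.cast_le.mpr (card_le_card hsub)
  have hPn : 0 < Pn := hPm.trans_le hPmn
  have hSm : |Sm| ≤ C * Pm :=
    (abs_sum_le_sum_abs _ _).trans <| by
      simpa [mul_comm] using sum_le_sum fun (p : ℕ × ℕ) _ => ha p.1 p.2
  have hSnm : |Sn - Sm| ≤ C * (Pn - Pm) := by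
    rw [← sum_sdiff_eq_sub hsub]
    refine (abs_sum_le_sum_abs _ _).trans ?_
    have := sum_le_sum fun p (_ : p ∈ pairs n \ pairs m) => ha p.1 p.2
    rw [sum_const, card_sdiff_of_subset hsub, nsmul_eq_mul, Nat.cast_sub (card_le_card hsub)]
      at this
    linarith
  have hdiff : Sn / Pn - Sm / Pm = ((Sn - Sm) - Sm / Pm * (Pn - Pm)) / Pn := by
    field_simp
    ring
  rw [pairAvg_eq, pairAvg_eq, hdiff, abs_div, abs_of_pos hPn, div_le_iff₀ hPn]
  calc |Sn - Sm - Sm / Pm * (Pn - Pm)| ≤ |Sn - Sm| + |Sm / Pm * (Pn - Pm)| := abs_sub _ _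
    _ = |Sn - Sm| + |Sm| / Pm * (Pn - Pm) := by
        rw [abs_mul, abs_div, abs_of_pos hPm, abs_of_nonneg (sub_nonneg.2 hPmn)]
    _ ≤ C * (Pn - Pm) + C * Pm / Pm * (Pn - Pm) := by gcongr
    _ = 2 * C * (1 - Pm / Pn) * Pn := by field_simp; ring

lemma one_sub_card_pairs_div_le {s n : ℕ} (hs : 2 ≤ s) (hsn : s ^ 2 ≤ n) (hns : n < (s + 1) ^ 2) :
    1 - ((pairs (s ^ 2)).card : ℝ) / (pairs n).card ≤ 4 / (s + 1) := by
  have hn : (0 : ℝ) < (pairs n).card := card_pairs_pos (by nlinarith)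
  rw [one_sub_div hn.ne', div_le_div_iff₀ hn (by positivity)]
  simp only [card_pairs] at hn ⊢
  have ht : (2 : ℝ) ≤ s := by exact_mod_cast hs
  have h1 : (s : ℝ) ^ 2 ≤ n := by exact_mod_cast hsn
  have h2 : (n : ℝ) ≤ s ^ 2 + 2 * s := by exact_mod_cast (by nlinarith : n ≤ s ^ 2 + 2 * s)
  push_cast
  nlinarith [mul_nonneg (mul_nonneg (sub_nonneg.2 h2) (sub_nonneg.2 h1)) (sub_nonneg.2 ht),
    mul_nonneg (sub_nonneg.2 h2) (sub_nonneg.2 ht), mul_nonneg (sub_nonneg.2 h1) (sub_nonneg.2 ht)]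

lemma abs_pairAvg_sub_pairAvg_sqrt_le (ha : ∀ i j, |a i j| ≤ C) {n : ℕ} (hn : 4 ≤ n) :
    |pairAvg a n - pairAvg a (Nat.sqrt n ^ 2)| ≤ 2 * C * (4 / (Nat.sqrt n + 1)) := by
  have hs : 2 ≤ Nat.sqrt n := Nat.le_sqrt'.2 hn
  have hC : 0 ≤ C := (abs_nonneg _).trans (ha 0 0)
  calc _ ≤ 2 * C * (1 - ((pairs (Nat.sqrt n ^ 2)).card : ℝ) / (pairs n).card) :=
        abs_pairAvg_sub_pairAvg_le ha (by nlinarith) (Nat.sqrt_le' n)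
    _ ≤ 2 * C * (4 / (Nat.sqrt n + 1)) := by
        gcongr
        exact one_sub_card_pairs_div_le hs (Nat.sqrt_le' n) (Nat.lt_succ_sqrt' n)

theorem tendsto_pairAvg_of_tendsto_sq (ha : ∀ i j, |a i j| ≤ C) {l : ℝ}
    (h : Tendsto (fun s => pairAvg a (s ^ 2)) atTop (𝓝 l)) : Tendsto (pairAvg a) atTop (𝓝 l) := by
  have hsqrt : Tendsto Nat.sqrt atTop atTop :=
    tendsto_atTop_atTop.2 fun b => ⟨b ^ 2, fun n hn => Nat.le_sqrt'.2 hn⟩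
  have hbound : Tendsto (fun n => 2 * C * (4 / (Nat.sqrt n + 1 : ℝ))) atTop (𝓝 0) := by
    have := (tendsto_const_div_atTop_nhds_zero_nat (4 : ℝ)).comp
      ((tendsto_add_atTop_nat 1).comp hsqrt)
    simpa using this.const_mul (2 * C)
  have hdiff : Tendsto (fun n => pairAvg a n - pairAvg a (Nat.sqrt n ^ 2)) atTop (𝓝 0) :=
    squeeze_zero_norm' (eventually_atTop.2 ⟨4, fun n hn => abs_pairAvg_sub_pairAvg_sqrt_le ha hn⟩)
      hbound
  simpa using hdiff.add (h.comp hsqrt)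

end Deterministic

section Probability

variable {Ω α : Type*} [MeasurableSpace Ω] [MeasurableSpace α] {μ : Measure Ω}
  {Z : ℕ → Ω → α} {ν : Measure α} {h : α → α → ℝ} {C : ℝ}

lemma measurable_pairAvg (hZ : ∀ i, Measurable (Z i)) (hh : Measurable (Function.uncurry h))
    (n : ℕ) : Measurable fun ω => pairAvg (fun i j => h (Z i ω) (Z j ω)) n :=
  measurable_const.mul <| Finset.measurable_sum _ fun i _ => Finset.measurable_sum _ fun j _ =>
    hh.comp ((hZ i).prodMk (hZ j))

lemma integral_apply_eq_integral_prod [IsFiniteMeasure μ] (hZ : ∀ i, Measurable (Z i))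
    (hindep : iIndepFun Z μ) (hlaw : ∀ i, μ.map (Z i) = ν) (hh : Measurable (Function.uncurry h))
    {i j : ℕ} (hij : i ≠ j) :
    ∫ ω, h (Z i ω) (Z j ω) ∂μ = ∫ p, h p.1 p.2 ∂ν.prod ν := by
  have hpair : μ.map (fun ω => (Z i ω, Z j ω)) = ν.prod ν := by
    rw [(indepFun_iff_map_prod_eq_prod_map_map (hZ i).aemeasurable (hZ j).aemeasurable).mp
      (hindep.indepFun hij), hlaw i, hlaw j]
  rw [← hpair]
  exact (integral_map ((hZ i).prodMk (hZ j)).aemeasurable hh.aestronglyMeasurable).symm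

lemma abs_integral_prod_le [IsProbabilityMeasure μ] (hZ : ∀ i, Measurable (Z i))
    (hlaw : ∀ i, μ.map (Z i) = ν) (hb : ∀ x y, |h x y| ≤ C) :
    |∫ p, h p.1 p.2 ∂ν.prod ν| ≤ C := by
  have : IsProbabilityMeasure ν := hlaw 0 ▸ Measure.isProbabilityMeasure_map (hZ 0).aemeasurable
  simpa using norm_integral_le_of_norm_le_const (μ := ν.prod ν)
    (ae_of_all _ fun p => (Real.norm_eq_abs _).trans_le (hb p.1 p.2))

lemma integral_centered_mul_eq_zero [IsProbabilityMeasure μ] (hZ : ∀ i, Measurable (Z i))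
    (hindep : iIndepFun Z μ) (hlaw : ∀ i, μ.map (Z i) = ν) (hh : Measurable (Function.uncurry h))
    (hb : ∀ x y, |h x y| ≤ C) {i j k l : ℕ} (hij : i ≠ j)
    (hik : i ≠ k) (hil : i ≠ l) (hjk : j ≠ k) (hjl : j ≠ l) :
    ∫ ω, (h (Z i ω) (Z j ω) - ∫ p, h p.1 p.2 ∂ν.prod ν) *
      (h (Z k ω) (Z l ω) - ∫ p, h p.1 p.2 ∂ν.prod ν) ∂μ = 0 := by
  set τ := ∫ p, h p.1 p.2 ∂ν.prod ν
  have hc : Measurable fun z : α × α => h z.1 z.2 - τ := hh.sub measurable_const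
  have hind := (hindep.indepFun_prodMk_prodMk hZ i j k l hik hil hjk hjl).comp hc hc
  have hmean : ∫ ω, (h (Z i ω) (Z j ω) - τ) ∂μ = 0 := by
    have hint : Integrable (fun ω => h (Z i ω) (Z j ω)) μ :=
      .of_bound (hh.comp ((hZ i).prodMk (hZ j))).aestronglyMeasurable C
        (ae_of_all _ fun _ => hb _ _)
    rw [integral_sub hint (integrable_const τ),
      integral_apply_eq_integral_prod hZ hindep hlaw hh hij]
    simp [τ]
  exact (hind.integral_mul_eq_mul_integral
    (hc.comp ((hZ i).prodMk (hZ j))).aestronglyMeasurable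
    (hc.comp ((hZ k).prodMk (hZ l))).aestronglyMeasurable).trans (by simp [hmean])

lemma integral_sq_pairAvg_sub_le [IsProbabilityMeasure μ] (hZ : ∀ i, Measurable (Z i))
    (hindep : iIndepFun Z μ) (hlaw : ∀ i, μ.map (Z i) = ν) (hh : Measurable (Function.uncurry h))
    (hb : ∀ x y, |h x y| ≤ C) {n : ℕ} (hn : 2 ≤ n) :
    ∫ ω, (pairAvg (fun i j => h (Z i ω) (Z j ω)) n - ∫ p, h p.1 p.2 ∂ν.prod ν) ^ 2 ∂μ ≤
      64 * C ^ 2 / n := by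
  set τ := ∫ p, h p.1 p.2 ∂ν.prod ν
  set P : ℝ := ((pairs n).card : ℝ)
  set g : ℕ × ℕ → Ω → ℝ := fun p ω => h (Z p.1 ω) (Z p.2 ω) - τ
  have hτ : |τ| ≤ C := abs_integral_prod_le hZ hlaw hb
  have hg : ∀ p ω, |g p ω| ≤ 2 * C := fun p ω =>
    (abs_sub _ _).trans (by linarith [hb (Z p.1 ω) (Z p.2 ω)])
  have hrepr : ∀ ω, pairAvg (fun i j => h (Z i ω) (Z j ω)) n - τ = (∑ p ∈ pairs n, g p ω) / P :=
    fun ω => by rw [pairAvg_sub_const hn, pairAvg_eq]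
  have hoverlap : ∑ p ∈ pairs n, ((pairs n).filter fun q =>
      q.1 = p.1 ∨ q.1 = p.2 ∨ q.2 = p.1 ∨ q.2 = p.2).card ≤ (pairs n).card * (4 * n) := by
    simpa using sum_le_card_nsmul _ _ _ fun p _ => card_filter_pairs_overlap_le n p
  have hsum : ∫ ω, (∑ p ∈ pairs n, g p ω) ^ 2 ∂μ ≤ (2 * C) ^ 2 * (P * (4 * n)) := by
    refine (integral_sq_sum_le_of_integral_mul_eq_zero (pairs n)
      (fun p => ((hh.comp ((hZ p.1).prodMk (hZ p.2))).sub measurable_const).aestronglyMeasurable)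
      hg (fun p q => q.1 = p.1 ∨ q.1 = p.2 ∨ q.2 = p.1 ∨ q.2 = p.2)
      fun p hp q hq hpq => ?_).trans ?_
    · rw [mem_pairs] at hp hq
      exact integral_centered_mul_eq_zero hZ hindep hlaw hh hb hp.1.ne (by omega) (by omega)
        (by omega) (by omega)
    · gcongr
      simpa [P] using (Nat.cast_le (α := ℝ)).2 hoverlap
  have hP : 0 < P := card_pairs_pos hn
  have hn' : (2 : ℝ) ≤ n := by exact_mod_cast hn
  calc _ = (∫ ω, (∑ p ∈ pairs n, g p ω) ^ 2 ∂μ) / P ^ 2 := by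
        simp_rw [hrepr, div_pow]
        exact integral_div _ _
    _ ≤ (2 * C) ^ 2 * (P * (4 * n)) / P ^ 2 := by gcongr
    _ = 32 * C ^ 2 / (n - 1) := by
        rw [show P = n * (n - 1) / 2 from card_pairs n] at hP ⊢
        have : (n : ℝ) - 1 ≠ 0 := by linarith
        field_simp
        ring
    _ ≤ 64 * C ^ 2 / n := by
        rw [div_le_div_iff₀ (by linarith) (by linarith)]
        nlinarith [sq_nonneg C]

theorem ae_tendsto_pairAvg [IsProbabilityMeasure μ] (hZ : ∀ i, Measurable (Z i))
    (hindep : iIndepFun Z μ) (hlaw : ∀ i, μ.map (Z i) = ν) (hh : Measurable (Function.uncurry h))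
    (hb : ∀ x y, |h x y| ≤ C) :
    ∀ᵐ ω ∂μ, Tendsto (pairAvg fun i j => h (Z i ω) (Z j ω)) atTop
      (𝓝 (∫ p, h p.1 p.2 ∂ν.prod ν)) := by
  set τ := ∫ p, h p.1 p.2 ∂ν.prod ν
  have hτ : |τ| ≤ C := abs_integral_prod_le hZ hlaw hb
  have hint : ∀ s : ℕ,
      Integrable (fun ω => (pairAvg (fun i j => h (Z i ω) (Z j ω)) (s ^ 2) - τ) ^ 2) μ :=
    fun s => .of_bound (((measurable_pairAvg hZ hh _).sub_const τ).pow_const 2).aestronglyMeasurable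
      ((2 * C) ^ 2) <| ae_of_all _ fun ω => by
        rw [Real.norm_eq_abs, abs_pow]
        gcongr
        exact (abs_sub _ _).trans
          (by linarith [abs_pairAvg_le (fun i j => hb (Z i ω) (Z j ω)) (s ^ 2)])
  have hsum : Summable fun s : ℕ =>
      ∫ ω, (pairAvg (fun i j => h (Z i ω) (Z j ω)) (s ^ 2) - τ) ^ 2 ∂μ := by
    refine Summable.of_norm_bounded_eventually_nat
      ((Real.summable_one_div_nat_pow.2 one_lt_two).mul_left (64 * C ^ 2))
      (eventually_atTop.2 ⟨2, fun s hs => ?_⟩)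
    rw [Real.norm_of_nonneg (integral_nonneg fun _ => sq_nonneg _)]
    refine (integral_sq_pairAvg_sub_le hZ hindep hlaw hh hb (by nlinarith)).trans_eq ?_
    push_cast
    ring
  filter_upwards [ae_tendsto_zero_of_summable_integral_sq hint hsum] with ω hω
  exact tendsto_pairAvg_of_tendsto_sq (fun i j => hb _ _) (by simpa using hω.add_const τ)

end Probability

end UStat

lemma Real.measurable_sign : Measurable Real.sign :=
  Measurable.ite measurableSet_Iio measurable_const
    (Measurable.ite measurableSet_Ioi measurable_const measurable_const)

lemma Real.abs_sign_le_one (x : ℝ) : |Real.sign x| ≤ 1 := by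
  rcases Real.sign_apply_eq x with h | h | h <;> simp [h]

noncomputable def kendallKernel (z w : ℝ × ℝ) : ℝ := Real.sign ((z.1 - w.1) * (z.2 - w.2))

lemma measurable_kendallKernel : Measurable (Function.uncurry kendallKernel) :=
  Real.measurable_sign.comp <| (measurable_fst.fst.sub measurable_snd.fst).mul
    (measurable_fst.snd.sub measurable_snd.snd)

/-- Consistency of the sample Kendall's tau: for an i.i.d. sequence of random
vectors `Z i = (U i, V i)` in `ℝ²` with common law `ν`, the sample Kendall's tau
converges almost surely (hence in probability) to the population Kendall's tau. -/
theorem kendall_tau_consistency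
    {Ω : Type*} [MeasurableSpace Ω] (μ : Measure Ω) [IsProbabilityMeasure μ]
    (Z : ℕ → Ω → ℝ × ℝ)
    (hZmeas : ∀ i, Measurable (Z i))
    (hindep : iIndepFun Z μ)
    (ν : Measure (ℝ × ℝ))
    (hlaw : ∀ i, Measure.map (Z i) μ = ν)
    (τhat : ℕ → Ω → ℝ)
    (hτhat : ∀ n ω, τhat n ω =
      (2 / (n * (n - 1) : ℝ)) *
        ∑ i ∈ Finset.range n, ∑ j ∈ Finset.Ioo i n,
          Real.sign (((Z i ω).1 - (Z j ω).1) * ((Z i ω).2 - (Z j ω).2)))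
    (τstar : ℝ)
    (hτstar : τstar =
      ∫ p : (ℝ × ℝ) × (ℝ × ℝ),
        Real.sign ((p.1.1 - p.2.1) * (p.1.2 - p.2.2)) ∂(ν.prod ν)) :
    (∀ᵐ ω ∂μ, Tendsto (fun n => τhat n ω) atTop (nhds τstar)) ∧
      TendstoInMeasure μ τhat atTop (fun _ => τstar) := by
  have hτhat' : τhat = fun n ω => UStat.pairAvg (fun i j => kendallKernel (Z i ω) (Z j ω)) n :=
    funext₂ hτhat
  have hae : ∀ᵐ ω ∂μ, Tendsto (fun n => τhat n ω) atTop (𝓝 τstar) := by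
    rw [hτhat', hτstar]
    exact UStat.ae_tendsto_pairAvg hZmeas hindep hlaw measurable_kendallKernel
      fun z w => Real.abs_sign_le_one _
  refine ⟨hae, tendstoInMeasure_of_tendsto_ae (fun n => ?_) hae⟩
  rw [hτhat']
  exact (UStat.measurable_pairAvg hZmeas measurable_kendallKernel n).aestronglyMeasurable
end

section
/- (Strong law of large numbers for U-statistics of degree 2.) Let E be a measurable space, let (Ω, μ) be a probability space, let Z_i : Ω → E, i ∈ ℕ, be an i.i.d. sequence with common law ν, and let h : E × E → ℝ be a bounded measurable symmetric kernel (h(x,y) = h(y,x)). Define the U-statistic U_n = (2/(n(n−1))) · Σ_{1≤i<j≤n} h(Z_i, Z_j). Then U_n converges almost surely to θ = ∫∫ h d(ν ⊗ ν) as n → ∞. -/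
/-! Centering the kernel at `θ` leaves a bounded kernel `G` of mean zero. Terms `G (Z i, Z j)`
and `G (Z k, Z l)` with disjoint index pairs are independent, hence uncorrelated, so the second
moment of the sum over the `n (n - 1) / 2` pairs is `O(n³)` and that of the average is `O(1/n)`.
Along the squares `n = k²` these second moments are summable, which forces almost sure
convergence. Between consecutive squares only a vanishing fraction of the pairs is added, and
the kernel is bounded, so the whole sequence follows the subsequence. -/

open MeasureTheory ProbabilityTheory Filter Finset
open scoped Topology BigOperators

namespace UStatistic

def pairs (n : ℕ) : Finset (ℕ × ℕ) :=
  (range n ×ˢ range n).filter fun q => q.1 < q.2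

lemma mem_pairs {n : ℕ} {q : ℕ × ℕ} : q ∈ pairs n ↔ q.1 < q.2 ∧ q.2 < n := by
  simp only [pairs, mem_filter, mem_product, mem_range]
  omega

lemma sum_pairs {R : Type*} [AddCommMonoid R] (n : ℕ) (F : ℕ → ℕ → R) :
    ∑ q ∈ pairs n, F q.1 q.2 = ∑ i ∈ range n, ∑ j ∈ Ioo i n, F i j := by
  rw [pairs, sum_filter, sum_product]
  refine sum_congr rfl fun i _ => ?_
  rw [← sum_filter]
  congr 1
  ext j
  simp [and_comm]

lemma card_pairs (n : ℕ) : #(pairs n) = n.choose 2 := by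
  rw [card_eq_sum_ones, sum_pairs n fun _ _ => 1, Nat.choose_two_right, ← sum_range_id n,
    ← sum_range_reflect]
  refine sum_congr rfl fun i hi => ?_
  simp only [sum_const, smul_eq_mul, mul_one, Nat.card_Ioo]
  have := mem_range.1 hi
  omega

lemma pairs_mono : Monotone pairs := fun _ _ hmn _ hq =>
  mem_pairs.2 (by have := mem_pairs.1 hq; omega)

lemma pairs_nonempty {n : ℕ} (hn : 2 ≤ n) : (pairs n).Nonempty :=
  ⟨(0, 1), mem_pairs.2 (by omega)⟩

lemma card_pairs_le_sq (n : ℕ) : #(pairs n) ≤ n ^ 2 :=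
  (card_filter_le _ _).trans (by rw [card_product, card_range, sq])

lemma card_pairs_meeting_le (n : ℕ) (p : ℕ × ℕ) :
    #((pairs n).filter fun q => q.1 ∈ ({p.1, p.2} : Finset ℕ) ∨ q.2 ∈ ({p.1, p.2} : Finset ℕ))
      ≤ 4 * n := by
  have hsub : (pairs n).filter (fun q => q.1 ∈ ({p.1, p.2} : Finset ℕ) ∨
      q.2 ∈ ({p.1, p.2} : Finset ℕ)) ⊆ {p.1, p.2} ×ˢ range n ∪ range n ×ˢ {p.1, p.2} := by
    intro q hq
    obtain ⟨hq, hmeet⟩ := mem_filter.1 hq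
    have := mem_pairs.1 hq
    simp only [mem_union, mem_product, mem_range, mem_insert, mem_singleton] at hmeet ⊢
    omega
  calc _ ≤ #({p.1, p.2} ×ˢ range n ∪ range n ×ˢ {p.1, p.2}) := card_le_card hsub
    _ ≤ 2 * n + n * 2 := by
      refine (card_union_le _ _).trans (add_le_add ?_ ?_) <;>
        simp only [card_product, card_range] <;> gcongr <;> exact card_le_two
    _ = 4 * n := by ring

lemma abs_expect_le_of_abs_le {ι : Type*} {s : Finset ι} {Y : ι → ℝ} {B : ℝ} (hB : 0 ≤ B)
    (hY : ∀ i ∈ s, |Y i| ≤ B) : |𝔼 i ∈ s, Y i| ≤ B := by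
  rcases s.eq_empty_or_nonempty with rfl | hs
  · simpa using hB
  · exact abs_le.2 ⟨le_expect hs fun i hi => (abs_le.1 (hY i hi)).1,
      expect_le hs fun i hi => (abs_le.1 (hY i hi)).2⟩

/-- Centering at `𝔼 i ∈ s, Y i` kills the terms indexed by `s`, and each of the
`#t - #s` remaining terms is at most `2 * B` in absolute value. -/
lemma abs_expect_sub_expect_le {ι : Type*} {s t : Finset ι} {Y : ι → ℝ} {B : ℝ} (hst : s ⊆ t)
    (hs : s.Nonempty) (hY : ∀ i ∈ t, |Y i| ≤ B) :
    |𝔼 i ∈ t, Y i - 𝔼 i ∈ s, Y i| ≤ 2 * B * (1 - #s / #t) := by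
  classical
  set m := 𝔼 i ∈ s, Y i
  obtain ⟨i₀, hi₀⟩ := hs
  have hB : 0 ≤ B := (abs_nonneg _).trans (hY i₀ (hst hi₀))
  have hm : |m| ≤ B := abs_expect_le_of_abs_le hB fun i hi => hY i (hst hi)
  have hs_pos : (0 : ℝ) < #s := by exact_mod_cast card_pos.2 ⟨i₀, hi₀⟩
  have ht_pos : (0 : ℝ) < #t := by exact_mod_cast card_pos.2 ⟨i₀, hst hi₀⟩
  have hcentered : ∑ i ∈ s, (Y i - m) = 0 := by
    rw [sum_sub_distrib, sum_const, nsmul_eq_mul, show m = _ from expect_eq_sum_div_card s Y]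
    field_simp
    ring
  have hdiff : 𝔼 i ∈ t, Y i - m = (∑ i ∈ t \ s, (Y i - m)) / #t := by
    rw [← add_zero (∑ i ∈ t \ s, _), ← hcentered, sum_sdiff hst, sum_sub_distrib, sum_const,
      nsmul_eq_mul, expect_eq_sum_div_card]
    field_simp
  have hcard : ((#(t \ s) : ℕ) : ℝ) = #t - #s := by
    rw [card_sdiff_of_subset hst, Nat.cast_sub (card_le_card hst)]
  rw [hdiff, abs_div, abs_of_pos ht_pos, div_le_iff₀ ht_pos]
  calc |∑ i ∈ t \ s, (Y i - m)| ≤ ∑ i ∈ t \ s, |Y i - m| := abs_sum_le_sum_abs _ _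
    _ ≤ ∑ i ∈ t \ s, 2 * B := sum_le_sum fun i hi =>
        (abs_sub _ _).trans (by linarith [hY i (Finset.mem_sdiff.1 hi).1])
    _ = 2 * B * (1 - #s / #t) * #t := by
        rw [sum_const, nsmul_eq_mul, hcard]
        field_simp

lemma tendsto_nat_sqrt_atTop : Tendsto Nat.sqrt atTop atTop :=
  tendsto_atTop_atTop.2 fun b => ⟨b * b, fun _ hn => Nat.le_sqrt.2 hn⟩

lemma tendsto_card_pairs_sqrt_sq_div :
    Tendsto (fun n : ℕ => (#(pairs (n.sqrt ^ 2)) : ℝ) / #(pairs n)) atTop (𝓝 1) := by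
  have hlower : Tendsto (fun n : ℕ => 1 - 8 / (n.sqrt : ℝ)) atTop (𝓝 1) := by
    simpa using (tendsto_const_nhds (x := (1 : ℝ))).sub
      ((tendsto_const_div_atTop_nhds_zero_nat (8 : ℝ)).comp tendsto_nat_sqrt_atTop)
  refine tendsto_of_tendsto_of_tendsto_of_le_of_le' hlower tendsto_const_nhds ?_ ?_
  · filter_upwards [eventually_ge_atTop 4] with n hn
    set t := n.sqrt
    have ht : 2 ≤ t := Nat.le_sqrt.2 hn
    have hlo : t ^ 2 ≤ n := Nat.sqrt_le' n
    have hhi : n ≤ t ^ 2 + 2 * t := by have := Nat.lt_succ_sqrt' n; nlinarith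
    have htR : (2 : ℝ) ≤ t := by exact_mod_cast ht
    have hloR : ((t ^ 2 : ℕ) : ℝ) ≤ n := by exact_mod_cast hlo
    have hhiR : (n : ℝ) ≤ (t : ℝ) ^ 2 + 2 * t := by exact_mod_cast hhi
    push_cast at hloR
    rw [card_pairs, card_pairs, Nat.cast_choose_two, Nat.cast_choose_two]
    push_cast
    have hn1 : (1 : ℝ) < n := by exact_mod_cast (by omega : 1 < n)
    rw [div_div_div_cancel_right₀ two_ne_zero, sub_le_iff_le_add,
      div_add_div _ _ (by positivity) (by positivity), le_div_iff₀ (by positivity)]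
    have hgap : ((n : ℝ) - t ^ 2) * (n + t ^ 2 - 1) ≤ 2 * t * (2 * n) :=
      mul_le_mul (by linarith) (by linarith) (by nlinarith) (by positivity)
    nlinarith [mul_le_mul_of_nonneg_left hgap (by positivity : (0 : ℝ) ≤ t),
      mul_le_mul_of_nonneg_right hloR (by positivity : (0 : ℝ) ≤ n)]
  · filter_upwards with n
    exact div_le_one_of_le₀ (mod_cast card_le_card (pairs_mono (Nat.sqrt_le' n)))
      (Nat.cast_nonneg _)

lemma tendsto_expect_pairs_of_tendsto_sq {Y : ℕ × ℕ → ℝ} {B a : ℝ} (hY : ∀ q, |Y q| ≤ B)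
    (h : Tendsto (fun k => 𝔼 q ∈ pairs (k ^ 2), Y q) atTop (𝓝 a)) :
    Tendsto (fun n => 𝔼 q ∈ pairs n, Y q) atTop (𝓝 a) := by
  have hbound : Tendsto (fun n : ℕ => 2 * B * (1 - (#(pairs (n.sqrt ^ 2)) : ℝ) / #(pairs n)))
      atTop (𝓝 0) := by
    simpa using
      ((tendsto_const_nhds (x := (1 : ℝ))).sub tendsto_card_pairs_sqrt_sq_div).const_mul (2 * B)
  have hgap : Tendsto (fun n => 𝔼 q ∈ pairs n, Y q - 𝔼 q ∈ pairs (n.sqrt ^ 2), Y q) atTop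
      (𝓝 0) := by
    refine squeeze_zero_norm' ?_ hbound
    filter_upwards [eventually_ge_atTop 4] with n hn
    have hsqrt : 2 ≤ n.sqrt := Nat.le_sqrt.2 hn
    exact abs_expect_sub_expect_le (pairs_mono (Nat.sqrt_le' n)) (pairs_nonempty (by nlinarith))
      fun q _ => hY q
  simpa using (h.comp tendsto_nat_sqrt_atTop).add hgap


section Probability

variable {Ω E : Type*} [MeasurableSpace Ω] [MeasurableSpace E] {μ : Measure Ω}

lemma ae_tendsto_zero_of_summable_integral_sq {X : ℕ → Ω → ℝ}
    (hint : ∀ k, Integrable (fun ω => X k ω ^ 2) μ)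
    (hsum : Summable fun k => ∫ ω, X k ω ^ 2 ∂μ) :
    ∀ᵐ ω ∂μ, Tendsto (fun k => X k ω) atTop (𝓝 0) := by
  have hfin : ∑' k, eLpNorm (fun ω => X k ω ^ 2) 1 μ ≠ ⊤ := by
    simp_rw [eLpNorm_one_eq_lintegral_enorm, ← ofReal_integral_norm_eq_lintegral_enorm (hint _),
      Real.norm_eq_abs, abs_pow, sq_abs]
    rw [← ENNReal.ofReal_tsum_of_nonneg (fun k => integral_nonneg fun _ => sq_nonneg _) hsum]
    exact ENNReal.ofReal_ne_top
  filter_upwards [summable_norm_of_tsum_eLpNorm_ne_top le_rfl (fun k => (hint k).1) hfin]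
    with ω hω
  have hsq : Tendsto (fun k => X k ω ^ 2) atTop (𝓝 0) := by
    simpa using hω.tendsto_atTop_zero
  refine (tendsto_zero_iff_abs_tendsto_zero _).2 ?_
  simpa [Function.comp_def, Real.sqrt_sq_eq_abs] using hsq.sqrt

variable {Z : ℕ → Ω → E}

lemma integral_comp_pair_eq [IsFiniteMeasure μ] (hZ : ∀ i, Measurable (Z i))
    (hindep : iIndepFun Z μ) {ν : Measure E} (hlaw : ∀ i, μ.map (Z i) = ν) {G : E × E → ℝ}
    (hG : Measurable G) {i j : ℕ} (hij : i ≠ j) :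
    ∫ ω, G (Z i ω, Z j ω) ∂μ = ∫ p, G p ∂(ν.prod ν) := by
  have hpair : μ.map (fun ω => (Z i ω, Z j ω)) = ν.prod ν := by
    rw [(indepFun_iff_map_prod_eq_prod_map_map (hZ i).aemeasurable (hZ j).aemeasurable).1
      (hindep.indepFun hij), hlaw i, hlaw j]
  rw [← hpair, integral_map ((hZ i).prodMk (hZ j)).aemeasurable hG.aestronglyMeasurable]

lemma integral_mul_eq_zero_of_disjoint (hZ : ∀ i, Measurable (Z i)) (hindep : iIndepFun Z μ)
    {G : E × E → ℝ} (hG : Measurable G)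
    (hmean : ∀ i j, i ≠ j → ∫ ω, G (Z i ω, Z j ω) ∂μ = 0) {i j k l : ℕ} (hkl : k ≠ l)
    (hik : i ≠ k) (hil : i ≠ l) (hjk : j ≠ k) (hjl : j ≠ l) :
    ∫ ω, G (Z i ω, Z j ω) * G (Z k ω, Z l ω) ∂μ = 0 := by
  have hindep' := (hindep.indepFun_prodMk_prodMk hZ i j k l hik hil hjk hjl).comp hG hG
  refine (hindep'.integral_fun_mul_eq_mul_integral
    (hG.comp ((hZ i).prodMk (hZ j))).aestronglyMeasurable
    (hG.comp ((hZ k).prodMk (hZ l))).aestronglyMeasurable).trans ?_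
  exact mul_eq_zero_of_right _ (hmean k l hkl)

/-- Only the `O(n ^ 3)` products of pairs sharing an index have nonzero expectation. -/
lemma integral_sq_sum_pairs_le [IsProbabilityMeasure μ] (hZ : ∀ i, Measurable (Z i))
    (hindep : iIndepFun Z μ)
    {G : E × E → ℝ} (hG : Measurable G) {C : ℝ} (hGC : ∀ p, |G p| ≤ C)
    (hmean : ∀ i j, i ≠ j → ∫ ω, G (Z i ω, Z j ω) ∂μ = 0) (n : ℕ) :
    ∫ ω, (∑ q ∈ pairs n, G (Z q.1 ω, Z q.2 ω)) ^ 2 ∂μ ≤ 4 * C ^ 2 * n ^ 3 := by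
  classical
  set Y : ℕ × ℕ → Ω → ℝ := fun q ω => G (Z q.1 ω, Z q.2 ω)
  have hY_bdd : ∀ q ω, |Y q ω| ≤ C := fun q ω => hGC _
  have hYY_bdd : ∀ p q ω, ‖Y p ω * Y q ω‖ ≤ C ^ 2 := fun p q ω => by
    rw [Real.norm_eq_abs, abs_mul, sq]
    exact mul_le_mul (hY_bdd p ω) (hY_bdd q ω) (abs_nonneg _)
      ((abs_nonneg _).trans (hY_bdd p ω))
  have hYY_int : ∀ p q, Integrable (fun ω => Y p ω * Y q ω) μ := fun p q =>
    .of_bound (((hG.comp ((hZ p.1).prodMk (hZ p.2))).mul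
      (hG.comp ((hZ q.1).prodMk (hZ q.2)))).aestronglyMeasurable) _ (ae_of_all _ (hYY_bdd p q))
  have hcov_le : ∀ p q, ∫ ω, Y p ω * Y q ω ∂μ ≤ C ^ 2 := fun p q => by
    have := norm_integral_le_of_norm_le_const (ae_of_all μ (hYY_bdd p q))
    rw [probReal_univ, mul_one, Real.norm_eq_abs] at this
    exact (le_abs_self _).trans this
  have hcov_zero : ∀ p ∈ pairs n, ∀ q ∈ pairs n,
      ¬ (q.1 ∈ ({p.1, p.2} : Finset ℕ) ∨ q.2 ∈ ({p.1, p.2} : Finset ℕ)) →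
      ∫ ω, Y p ω * Y q ω ∂μ = 0 := by
    intro p _ q hq hpq
    simp only [mem_insert, mem_singleton, not_or] at hpq
    exact integral_mul_eq_zero_of_disjoint hZ hindep hG hmean (mem_pairs.1 hq).1.ne
      (Ne.symm hpq.1.1) (Ne.symm hpq.2.1) (Ne.symm hpq.1.2) (Ne.symm hpq.2.2)
  calc ∫ ω, (∑ q ∈ pairs n, Y q ω) ^ 2 ∂μ
        = ∑ p ∈ pairs n, ∑ q ∈ pairs n, ∫ ω, Y p ω * Y q ω ∂μ := by
        simp_rw [sq, sum_mul_sum]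
        rw [integral_finsetSum _ fun p _ => integrable_finsetSum _ fun q _ => hYY_int p q]
        exact sum_congr rfl fun p _ => integral_finsetSum _ fun q _ => hYY_int p q
    _ = ∑ p ∈ pairs n, ∑ q ∈ (pairs n).filter (fun q => q.1 ∈ ({p.1, p.2} : Finset ℕ) ∨
          q.2 ∈ ({p.1, p.2} : Finset ℕ)), ∫ ω, Y p ω * Y q ω ∂μ :=
        sum_congr rfl fun p hp => (sum_filter_of_ne fun q hq hne =>
          not_not.1 fun h => hne (hcov_zero p hp q hq h)).symm
    _ ≤ ∑ p ∈ pairs n, 4 * n * C ^ 2 := sum_le_sum fun p _ => by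
        refine (sum_le_card_nsmul _ _ _ fun q _ => hcov_le p q).trans ?_
        rw [nsmul_eq_mul]
        gcongr
        exact_mod_cast card_pairs_meeting_le n p
    _ ≤ 4 * C ^ 2 * n ^ 3 := by
        rw [sum_const, nsmul_eq_mul]
        have : (#(pairs n) : ℝ) ≤ n ^ 2 := by exact_mod_cast card_pairs_le_sq n
        nlinarith [mul_le_mul_of_nonneg_right this (by positivity : (0 : ℝ) ≤ 4 * n * C ^ 2)]

lemma integral_sq_expect_pairs_le [IsProbabilityMeasure μ] (hZ : ∀ i, Measurable (Z i))
    (hindep : iIndepFun Z μ) {G : E × E → ℝ} (hG : Measurable G) {C : ℝ}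
    (hGC : ∀ p, |G p| ≤ C) (hmean : ∀ i j, i ≠ j → ∫ ω, G (Z i ω, Z j ω) ∂μ = 0) (n : ℕ) :
    ∫ ω, (𝔼 q ∈ pairs n, G (Z q.1 ω, Z q.2 ω)) ^ 2 ∂μ ≤ 64 * C ^ 2 / n := by
  have hcard : (#(pairs n) : ℝ) = n * (n - 1) / 2 := by rw [card_pairs, Nat.cast_choose_two]
  simp_rw [expect_eq_sum_div_card, div_pow, hcard]
  rw [integral_div]
  calc (∫ ω, (∑ q ∈ pairs n, G (Z q.1 ω, Z q.2 ω)) ^ 2 ∂μ) / (n * (n - 1) / 2) ^ 2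
      ≤ 4 * C ^ 2 * n ^ 3 / (n * (n - 1) / 2) ^ 2 :=
        div_le_div_of_nonneg_right (integral_sq_sum_pairs_le hZ hindep hG hGC hmean n)
          (sq_nonneg _)
    _ ≤ 64 * C ^ 2 / n := by
        rcases lt_or_ge n 2 with hn | hn
        · interval_cases n <;> simp [sq_nonneg]
        · have hnR : (2 : ℝ) ≤ n := by exact_mod_cast hn
          rw [div_le_div_iff₀ (pow_pos (by nlinarith) 2) (by positivity)]
          nlinarith [mul_nonneg (mul_nonneg (sq_nonneg C) (sq_nonneg (n : ℝ)))
            (mul_nonneg (by linarith : (0 : ℝ) ≤ n - 2) (by linarith : (0 : ℝ) ≤ 3 * n - 2))]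

theorem ae_tendsto_expect_pairs_zero [IsProbabilityMeasure μ] (hZ : ∀ i, Measurable (Z i))
    (hindep : iIndepFun Z μ) {G : E × E → ℝ} (hG : Measurable G) {C : ℝ}
    (hGC : ∀ p, |G p| ≤ C) (hmean : ∀ i j, i ≠ j → ∫ ω, G (Z i ω, Z j ω) ∂μ = 0) :
    ∀ᵐ ω ∂μ, Tendsto (fun n => 𝔼 q ∈ pairs n, G (Z q.1 ω, Z q.2 ω)) atTop (𝓝 0) := by
  set X : ℕ → Ω → ℝ := fun k ω => 𝔼 q ∈ pairs (k ^ 2), G (Z q.1 ω, Z q.2 ω)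
  have hX_meas : ∀ k, Measurable (X k) := fun k => by
    simp_rw [X, expect_eq_sum_div_card]
    exact (Finset.measurable_sum _ fun q _ => hG.comp ((hZ q.1).prodMk (hZ q.2))).div_const _
  have hX_int : ∀ k, Integrable (fun ω => X k ω ^ 2) μ := fun k =>
    .of_bound ((hX_meas k).pow_const 2).aestronglyMeasurable (C ^ 2) (ae_of_all _ fun ω => by
      have hC : 0 ≤ C := (abs_nonneg _).trans (hGC (Z 0 ω, Z 0 ω))
      rw [Real.norm_eq_abs, abs_pow]
      exact pow_le_pow_left₀ (abs_nonneg _) (abs_expect_le_of_abs_le hC fun q _ => hGC _) 2)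
  have hX_sum : Summable fun k => ∫ ω, X k ω ^ 2 ∂μ := by
    refine .of_nonneg_of_le (fun k => integral_nonneg fun ω => sq_nonneg _)
      (fun k => (integral_sq_expect_pairs_le hZ hindep hG hGC hmean (k ^ 2)).trans_eq ?_)
      ((Real.summable_nat_pow_inv.2 one_lt_two).mul_left (64 * C ^ 2))
    push_cast
    ring
  filter_upwards [ae_tendsto_zero_of_summable_integral_sq hX_int hX_sum] with ω hω
  exact tendsto_expect_pairs_of_tendsto_sq (fun q => hGC _) hω

end Probability

end UStatistic

open UStatistic

theorem U_statistic_strong_law_general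
    {E : Type*} [MeasurableSpace E]
    {Ω : Type*} [MeasurableSpace Ω] (μ : Measure Ω) [IsProbabilityMeasure μ]
    (Z : ℕ → Ω → E)
    (hZmeas : ∀ i, Measurable (Z i))
    (hindep : iIndepFun Z μ)
    (ν : Measure E) [IsProbabilityMeasure ν]
    (hlaw : ∀ i, Measure.map (Z i) μ = ν)
    (h : E → E → ℝ)
    (hmeas : Measurable fun p : E × E => h p.1 p.2)
    (M : ℝ) (hbdd : ∀ x y, |h x y| ≤ M)
    (U : ℕ → Ω → ℝ)
    (hU : ∀ n ω, U n ω =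
      (2 / (n * (n - 1) : ℝ)) *
        ∑ i ∈ Finset.range n, ∑ j ∈ Finset.Ioo i n, h (Z i ω) (Z j ω))
    (θ : ℝ)
    (hθ : θ = ∫ p : E × E, h p.1 p.2 ∂(ν.prod ν)) :
    ∀ᵐ ω ∂μ, Tendsto (fun n => U n ω) atTop (nhds θ) := by
  -- for `n < 2` both sides are `0`, through `x / 0 = 0`
  have hU_eq : ∀ n ω, U n ω = 𝔼 q ∈ pairs n, h (Z q.1 ω) (Z q.2 ω) := fun n ω => by
    rw [hU, expect_eq_sum_div_card, card_pairs, Nat.cast_choose_two,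
      sum_pairs n fun i j => h (Z i ω) (Z j ω), div_div_eq_mul_div, div_mul_eq_mul_div, mul_comm]
  have hh_norm : ∀ p : E × E, ‖h p.1 p.2‖ ≤ M := fun p => hbdd p.1 p.2
  have hθ_bdd : |θ| ≤ M := by
    simpa [hθ] using norm_integral_le_of_norm_le_const (ae_of_all (ν.prod ν) hh_norm)
  have hG_meas : Measurable fun p : E × E => h p.1 p.2 - θ := hmeas.sub_const θ
  have hG_bdd : ∀ p : E × E, |h p.1 p.2 - θ| ≤ 2 * M := fun p =>
    (abs_sub _ _).trans (by linarith [hbdd p.1 p.2])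
  have hG_mean : ∀ i j, i ≠ j → ∫ ω, (h (Z i ω) (Z j ω) - θ) ∂μ = 0 := fun i j hij => by
    have hint : Integrable (fun p : E × E => h p.1 p.2) (ν.prod ν) :=
      .of_bound hmeas.aestronglyMeasurable M (ae_of_all _ hh_norm)
    rw [integral_comp_pair_eq hZmeas hindep hlaw hG_meas hij,
      integral_sub hint (integrable_const θ), integral_const, ← hθ]
    simp
  filter_upwards [ae_tendsto_expect_pairs_zero hZmeas hindep hG_meas hG_bdd hG_mean] with ω hω
  refine (zero_add θ ▸ hω.add_const θ).congr' ?_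
  filter_upwards [eventually_ge_atTop 2] with n hn
  rw [hU_eq, expect_sub_distrib, expect_const (pairs_nonempty hn), sub_add_cancel]

/-- Strong law of large numbers for U-statistics of degree 2: for an i.i.d.
sequence `Z i` with common law `ν` and a bounded measurable symmetric kernel
`h`, the U-statistic `U n = (2/(n(n-1))) Σ_{i<j} h (Z i) (Z j)` converges
almost surely to `θ = ∫∫ h d(ν ⊗ ν)`. -/
theorem U_statistic_strong_law
    {E : Type*} [MeasurableSpace E]
    {Ω : Type*} [MeasurableSpace Ω] (μ : Measure Ω) [IsProbabilityMeasure μ]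
    (Z : ℕ → Ω → E)
    (hZmeas : ∀ i, Measurable (Z i))
    (hindep : iIndepFun Z μ)
    (ν : Measure E) [IsProbabilityMeasure ν]
    (hlaw : ∀ i, Measure.map (Z i) μ = ν)
    (h : E → E → ℝ)
    (hmeas : Measurable fun p : E × E => h p.1 p.2)
    (M : ℝ) (hbdd : ∀ x y, |h x y| ≤ M)
    (hsymm : ∀ x y, h x y = h y x)
    (U : ℕ → Ω → ℝ)
    (hU : ∀ n ω, U n ω =
      (2 / (n * (n - 1) : ℝ)) *
        ∑ i ∈ Finset.range n, ∑ j ∈ Finset.Ioo i n, h (Z i ω) (Z j ω))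
    (θ : ℝ)
    (hθ : θ = ∫ p : E × E, h p.1 p.2 ∂(ν.prod ν)) :
    ∀ᵐ ω ∂μ, Tendsto (fun n => U n ω) atTop (nhds θ) :=
  U_statistic_strong_law_general μ Z hZmeas hindep ν hlaw h hmeas M hbdd U hU θ hθ
end

section
/- (Slutsky's theorem, ratio form.) Let (Ω, μ) be a probability space, let (X_n) and (Y_n) be sequences of real random variables on Ω, let μ₀ be a probability measure on ℝ, and let c ∈ ℝ with c ≠ 0. Suppose the laws of X_n converge weakly to μ₀, each Y_n is almost surely nonzero, and Y_n → c in probability. Then the laws of X_n / Y_n converge weakly to the pushforward of μ₀ under the map x ↦ x/c. -/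
/-!
Write `X n / Y n = X n * (Y n)⁻¹`. Inversion is continuous at `c ≠ 0`, so `(Y n)⁻¹ → c⁻¹` in
probability. Slutsky's theorem then makes `(X n, (Y n)⁻¹)` converge in distribution to `(Z, c⁻¹)`
with `Z ∼ μ₀`, and the continuous mapping theorem for multiplication gives `X n / Y n → Z / c`.
-/

open MeasureTheory Filter

/-- Weak convergence of a sequence of laws on `ℝ`: integrals of every bounded
continuous function converge. -/
def WeakConvergence (μs : ℕ → Measure ℝ) (μ₀ : Measure ℝ) : Prop :=
  ∀ f : BoundedContinuousFunction ℝ ℝ,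
    Tendsto (fun n => ∫ x, f x ∂(μs n)) atTop (nhds (∫ x, f x ∂μ₀))

theorem MeasureTheory.TendstoInMeasure.continuousAt_comp {α ι E F : Type*}
    [MeasurableSpace α] {μ : Measure α} [PseudoEMetricSpace E] [PseudoEMetricSpace F]
    {f : ι → α → E} {l : Filter ι} {c : E} {g : E → F}
    (hf : TendstoInMeasure μ f l (fun _ ↦ c)) (hg : ContinuousAt g c) :
    TendstoInMeasure μ (fun i ω ↦ g (f i ω)) l (fun _ ↦ g c) := by
  intro ε hε
  obtain ⟨δ, hδ, hgδ⟩ := EMetric.continuousAt_iff.1 hg ε hε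
  refine tendsto_of_tendsto_of_tendsto_of_le_of_le tendsto_const_nhds (hf δ hδ)
    (fun _ ↦ zero_le) fun i ↦ measure_mono fun ω hω ↦ ?_
  by_contra hlt
  exact (hgδ (not_le.1 hlt)).not_ge hω

theorem weakConvergence_map_iff_tendstoInDistribution {Ω Ω' : Type*} [MeasurableSpace Ω]
    [MeasurableSpace Ω'] {μ : Measure Ω} [IsProbabilityMeasure μ] {ν : Measure Ω'}
    [IsProbabilityMeasure ν] {X : ℕ → Ω → ℝ} {Z : Ω' → ℝ}
    (hX : ∀ n, AEMeasurable (X n) μ) (hZ : AEMeasurable Z ν) :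
    WeakConvergence (fun n ↦ μ.map (X n)) (ν.map Z) ↔
      TendstoInDistribution X atTop Z (fun _ ↦ μ) ν := by
  refine ⟨fun h ↦ ⟨hX, hZ, ?_⟩, fun h ↦ ?_⟩
  · exact ProbabilityMeasure.tendsto_iff_forall_integral_tendsto.2 h
  · exact ProbabilityMeasure.tendsto_iff_forall_integral_tendsto.1 h.tendsto

theorem slutsky_ratio_general
    {Ω : Type*} [MeasurableSpace Ω] (μ : Measure Ω) [IsProbabilityMeasure μ]
    (X Y : ℕ → Ω → ℝ)
    (hXmeas : ∀ n, Measurable (X n))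
    (hYmeas : ∀ n, Measurable (Y n))
    (μ₀ : Measure ℝ) [IsProbabilityMeasure μ₀]
    (c : ℝ) (hc : c ≠ 0)
    (hXweak : WeakConvergence (fun n => Measure.map (X n) μ) μ₀)
    (hYprob : TendstoInMeasure μ Y atTop (fun _ => c)) :
    WeakConvergence
      (fun n => Measure.map (fun ω => X n ω / Y n ω) μ)
      (Measure.map (fun x => x / c) μ₀) := by
  have hX : TendstoInDistribution X atTop id (fun _ ↦ μ) μ₀ :=
    (weakConvergence_map_iff_tendstoInDistribution (fun n ↦ (hXmeas n).aemeasurable)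
      aemeasurable_id).1 (by rwa [Measure.map_id])
  have hYinv : TendstoInMeasure μ (fun n ω ↦ (Y n ω)⁻¹) atTop (fun _ ↦ c⁻¹) :=
    hYprob.continuousAt_comp (continuousAt_inv₀ hc)
  have hXYinv := hX.continuous_comp_prodMk_of_tendstoInMeasure_const continuous_mul hYinv
    fun n ↦ (hYmeas n).inv.aemeasurable
  simp only [id, ← div_eq_mul_inv] at hXYinv
  exact (weakConvergence_map_iff_tendstoInDistribution
    (fun n ↦ ((hXmeas n).div (hYmeas n)).aemeasurable)
    (measurable_div_const c).aemeasurable).2 hXYinv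

/-- Slutsky's theorem (ratio form): if the laws of `X n` converge weakly to
`μ₀`, each `Y n` is a.s. nonzero, and `Y n → c ≠ 0` in probability, then the
laws of `X n / Y n` converge weakly to the pushforward of `μ₀` under
`x ↦ x / c`. -/
theorem slutsky_ratio
    {Ω : Type*} [MeasurableSpace Ω] (μ : Measure Ω) [IsProbabilityMeasure μ]
    (X Y : ℕ → Ω → ℝ)
    (hXmeas : ∀ n, Measurable (X n))
    (hYmeas : ∀ n, Measurable (Y n))
    (μ₀ : Measure ℝ) [IsProbabilityMeasure μ₀]
    (c : ℝ) (hc : c ≠ 0)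
    (hXweak : WeakConvergence (fun n => Measure.map (X n) μ) μ₀)
    (hYne : ∀ n, ∀ᵐ ω ∂μ, Y n ω ≠ 0)
    (hYprob : TendstoInMeasure μ Y atTop (fun _ => c)) :
    WeakConvergence
      (fun n => Measure.map (fun ω => X n ω / Y n ω) μ)
      (Measure.map (fun x => x / c) μ₀) :=
  slutsky_ratio_general μ X Y hXmeas hYmeas μ₀ c hc hXweak hYprob
end
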